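/- For all complex numbers t, f, g, a, b with f ≠ 0, the function ε ↦ 2√2·ε·F_V(1+√2·εt, εf/√2, g/2, 1/(2ε⁴), b/4, −1/ε⁴, a/ε² − 1/(2ε⁴)) tends to F_IV(t,f,g,a,b) = g²/(2f) + (3/2)f³ + 4tf² + 2(t²−a)f + b/f as ε → 0 along nonzero complex values of ε (punctured neighborhood filter of 0 in ℂ). -/

import Mathlib

/-!
Put `u = εf/√2` and `x = 1 + √2εt`. The parts of `α`, `γ`, `δ` of order `ε⁻⁴` contribute
`(u/(2ε⁴))·((u−1)³ − 2x(u−1) − (u+1)x²)/(x²(u−1))` to `F_V`, and this numerator vanishes to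
second order in `ε`. After cancelling `ε²`, the product `2√2ε·F_V` is a rational function of `ε`
without pole at `0`, and its value there is `F_IV`.
-/

/-- Right-hand side of the fifth Painlevé equation:
`F_V(x,u,v,α,β,γ,δ) = (1/(2u) + 1/(u−1))v² − v/x + ((u−1)²/x²)(αu + β/u) + γu/x
  + δ·u(u+1)/(u−1)`. -/
noncomputable def FV (x u v α β γ δ : ℂ) : ℂ :=
  (1 / (2 * u) + 1 / (u - 1)) * v ^ 2 - v / x
    + ((u - 1) ^ 2 / x ^ 2) * (α * u + β / u) + γ * u / x + δ * u * (u + 1) / (u - 1)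

/-- Right-hand side of the fourth Painlevé equation. -/
noncomputable def FIV (x u v α β : ℂ) : ℂ :=
  v ^ 2 / (2 * u) + (3 / 2) * u ^ 3 + 4 * x * u ^ 2 + 2 * (x ^ 2 - α) * u + β / u

open Filter Topology

/-- The last summand is `(f/ε²)·((u−1)³ − 2x(u−1) − (u+1)x²)/(x²(u−1))` with the factor `ε²`
of the numerator cancelled. -/
noncomputable def regularizedFV (s t f g a b ε : ℂ) : ℂ :=
  let u := ε * f / s
  let x := 1 + s * ε * t
  s ^ 2 * g ^ 2 / (4 * f) + s * ε * g ^ 2 / (2 * (u - 1)) - s * ε * g / x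
    + s ^ 2 * b * (u - 1) ^ 2 / (2 * f * x ^ 2) + 2 * a * f * (u + 1) / (u - 1)
    + f * (ε * f ^ 3 / s ^ 3 - 3 * f ^ 2 / s ^ 2 - 4 * f * t - ε * f * s * t ^ 2 - s ^ 2 * t ^ 2)
      / (x ^ 2 * (u - 1))

theorem two_mul_mul_FV_eq_regularizedFV {s t f g a b ε : ℂ} (hs : s ≠ 0) (hε : ε ≠ 0)
    (hf : f ≠ 0) (hx : 1 + s * ε * t ≠ 0) (hu : ε * f ≠ s) :
    2 * s * ε * FV (1 + s * ε * t) (ε * f / s) (g / 2) (1 / (2 * ε ^ 4)) (b / 4) (-1 / ε ^ 4)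
        (a / ε ^ 2 - 1 / (2 * ε ^ 4)) = regularizedFV s t f g a b ε := by
  unfold FV regularizedFV
  field_simp
  ring

theorem continuousAt_regularizedFV {f : ℂ} (hf : f ≠ 0) (s t g a b : ℂ) :
    ContinuousAt (regularizedFV s t f g a b) 0 := by
  unfold regularizedFV
  fun_prop (disch := simp [hf])

theorem regularizedFV_zero {s f : ℂ} (hs : s ^ 2 = 2) (hf : f ≠ 0) (t g a b : ℂ) :
    regularizedFV s t f g a b 0 = FIV t f g a b := by
  simp [regularizedFV, FIV, hs]
  field_simp
  ring

/-- Degeneration of Painlevé V to Painlevé IV: for all `t f g a b : ℂ` with `f ≠ 0`,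
the function `ε ↦ 2√2·ε·F_V(1+√2εt, εf/√2, g/2, 1/(2ε⁴), b/4, −1/ε⁴, a/ε² − 1/(2ε⁴))`
tends to `F_IV(t,f,g,a,b)` as `ε → 0` along nonzero complex values. -/
theorem stmt_5 (t f g a b : ℂ) (hf : f ≠ 0) :
    Filter.Tendsto
      (fun ε : ℂ =>
        2 * (Real.sqrt 2 : ℂ) * ε *
          FV (1 + (Real.sqrt 2 : ℂ) * ε * t) (ε * f / (Real.sqrt 2 : ℂ)) (g / 2)
            (1 / (2 * ε ^ 4)) (b / 4) (-1 / ε ^ 4) (a / ε ^ 2 - 1 / (2 * ε ^ 4)))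
      (nhdsWithin 0 {0}ᶜ) (nhds (FIV t f g a b)) := by
  set s : ℂ := (Real.sqrt 2 : ℂ)
  have hs2 : s ^ 2 = 2 := by
    rw [← Complex.ofReal_pow, Real.sq_sqrt zero_le_two, Complex.ofReal_ofNat]
  have hs : s ≠ 0 := by rintro h; norm_num [h] at hs2
  have hx : ∀ᶠ ε in 𝓝 (0 : ℂ), 1 + s * ε * t ≠ 0 :=
    (by fun_prop : Continuous fun ε : ℂ => 1 + s * ε * t).continuousAt.eventually_ne (by simp)
  have hu : ∀ᶠ ε in 𝓝 (0 : ℂ), ε * f ≠ s :=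
    (by fun_prop : Continuous fun ε : ℂ => ε * f).continuousAt.eventually_ne
      (by simpa using hs.symm)
  rw [← regularizedFV_zero hs2 hf t g a b]
  refine ((continuousAt_regularizedFV hf s t g a b).tendsto.mono_left nhdsWithin_le_nhds).congr' ?_
  filter_upwards [self_mem_nhdsWithin, nhdsWithin_le_nhds hx, nhdsWithin_le_nhds hu]
    with ε hε hxε huε
  exact (two_mul_mul_FV_eq_regularizedFV hs hε hf hxε huε).symm
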